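/- Conservation of mass for the second order (predictor–corrector) 1D scheme: if ρ* ∈ ℝ^N satisfies the predictor step and ρ^{n+1}_j = 2ρ*_j − ρ^n_j for all j, then Σ_{j=1}^N h_j ρ^{n+1}_j = Σ_{j=1}^N h_j ρ^n_j. -/

import Mathlib

/-! The predictor step is in flux form: `h_j (ρ*_j - ρⁿ_j) = (τ/2) (C*_{j+1/2} - C*_{j-1/2})`.
Hence the corrector update changes the mass of cell `j` by `τ (C*_{j+1/2} - C*_{j-1/2})`,
and these changes telescope to `τ (C*_{N+1/2} - C*_{1/2}) = 0` by the no-flux boundary condition. -/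

open Finset

theorem Finset.sum_Icc_one_sub_pred {M : Type*} [AddCommGroup M] (f : ℕ → M) (n : ℕ) :
    ∑ i ∈ Icc 1 n, (f i - f (i - 1)) = f n - f 0 := by
  induction n with
  | zero => simp
  | succ m ih =>
    rw [sum_Icc_succ_top (by omega), ih, Nat.add_sub_cancel]
    abel

lemma mul_corrector_sub_eq_flux_diff {h ρ ρstar ρ1 ΔC τ : ℝ} (hh : h ≠ 0) (hτ : τ ≠ 0)
    (hpred : (ρstar - ρ) / (τ / 2) = ΔC / h) (hcorr : ρ1 = 2 * ρstar - ρ) :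
    h * ρ1 = h * ρ + τ * ΔC := by
  rw [div_eq_div_iff (by positivity) hh] at hpred
  rw [hcorr]
  linear_combination 2 * hpred

theorem sum_mul_eq_of_flux_form (N : ℕ) (h ρ ρ1 C : ℕ → ℝ) (τ : ℝ)
    (hflux : ∀ j ∈ Icc 1 N, h j * ρ1 j = h j * ρ j + τ * (C j - C (j - 1))) :
    ∑ j ∈ Icc 1 N, h j * ρ1 j = ∑ j ∈ Icc 1 N, h j * ρ j + τ * (C N - C 0) := by
  rw [sum_congr rfl hflux, sum_add_distrib, ← mul_sum, sum_Icc_one_sub_pred]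

theorem predictor_corrector_mass_conservation_1d_general
    (N : ℕ)
    (h : ℕ → ℝ) (hpos : ∀ j ∈ Finset.Icc 1 N, 0 < h j)
    (ρn ρstar ρ1 : ℕ → ℝ) (τ : ℝ) (hτ : 0 < τ)
    (Cs : ℕ → ℝ)
    (hCs0 : Cs 0 = 0) (hCsN : Cs N = 0)
    (hpred : ∀ j ∈ Finset.Icc 1 N, (ρstar j - ρn j) / (τ / 2) = (Cs j - Cs (j - 1)) / h j)
    (hcorr : ∀ j ∈ Finset.Icc 1 N, ρ1 j = 2 * ρstar j - ρn j)
 :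
    ∑ j ∈ Finset.Icc 1 N, h j * ρ1 j = ∑ j ∈ Finset.Icc 1 N, h j * ρn j := by
  have hflux : ∀ j ∈ Icc 1 N, h j * ρ1 j = h j * ρn j + τ * (Cs j - Cs (j - 1)) := fun j hj =>
    mul_corrector_sub_eq_flux_diff (hpos j hj).ne' hτ.ne' (hpred j hj) (hcorr j hj)
  rw [sum_mul_eq_of_flux_form N h ρn ρ1 Cs τ hflux, hCs0, hCsN, sub_zero, mul_zero, add_zero]

theorem predictor_corrector_mass_conservation_1d
    (N : ℕ) (hN : 2 ≤ N)
    (h : ℕ → ℝ) (hpos : ∀ j ∈ Finset.Icc 1 N, 0 < h j)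
    (a : ℝ)
    (xhalf xc hhalf : ℕ → ℝ)
    (hxhalf0 : xhalf 0 = a)
    (hxhalf : ∀ j ∈ Finset.Icc 1 N, xhalf j = xhalf (j - 1) + h j)
    (hxc : ∀ j ∈ Finset.Icc 1 N, xc j = xhalf (j - 1) + h j / 2)
    (hhhalf : ∀ j ∈ Finset.Icc 1 (N - 1), hhalf j = (h j + h (j + 1)) / 2)
    (V W : ℝ → ℝ)
    (Q : ℝ → (ℕ → ℝ) → ℝ)
    (hQ : ∀ (x : ℝ) (v : ℕ → ℝ), Q x v =
      Real.exp (-V x - ∑ i ∈ Finset.Icc 1 N, h i * W (xc i - x) * v i))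
    (ρn ρnm1 ρstar ρ1 : ℕ → ℝ) (τ : ℝ) (hτ : 0 < τ)
    (Ms Mshalf : ℕ → ℝ)
    (hMs : ∀ j ∈ Finset.Icc 1 N, Ms j = Q (xc j) (fun i => 3 / 2 * ρn i - 1 / 2 * ρnm1 i))
    (hMshalf : ∀ j ∈ Finset.Icc 1 (N - 1),
      Mshalf j = Q (xhalf j) (fun i => 3 / 2 * ρn i - 1 / 2 * ρnm1 i))
    (Cs : ℕ → ℝ)
    (hCs : ∀ j ∈ Finset.Icc 1 (N - 1),
      Cs j = Mshalf j / hhalf j * (ρstar (j + 1) / Ms (j + 1) - ρstar j / Ms j))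
    (hCs0 : Cs 0 = 0) (hCsN : Cs N = 0)
    (hpred : ∀ j ∈ Finset.Icc 1 N, (ρstar j - ρn j) / (τ / 2) = (Cs j - Cs (j - 1)) / h j)
    (hcorr : ∀ j ∈ Finset.Icc 1 N, ρ1 j = 2 * ρstar j - ρn j)
 :
    ∑ j ∈ Finset.Icc 1 N, h j * ρ1 j = ∑ j ∈ Finset.Icc 1 N, h j * ρn j :=
  predictor_corrector_mass_conservation_1d_general N h hpos ρn ρstar ρ1 τ hτ Cs hCs0 hCsN hpred
    hcorr
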